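/- Let (X,d) be a finite metric space with |X| ≥ 3 and suppose the trimming relation is trivial, i.e. d(x,y) ≠ d̲(x) + d̲(y) for all distinct x,y ∈ X (equivalently, the trimming projection p : X → t(X) is bijective). Define d'(x,y) = d(x,y) − d̲(x) − d̲(y) for x ≠ y and d'(x,x) = 0. Then d' is a metric on X and (X,d') is trim: for every x ∈ X there exist distinct y,z ∈ X∖{x} with d'(y,z) = d'(y,x) + d'(x,z). -/
import Mathlib


/-- The pendant length of a point `x` of a (finite) metric space: the infimum of the
Gromov products `(d(x,y) + d(x,z) − d(y,z))/2` over distinct pairs `y, z` distinct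
from `x`. -/
noncomputable def pend {α : Type*} [MetricSpace α] (x : α) : ℝ :=
  sInf {g : ℝ | ∃ y z : α, y ≠ x ∧ z ≠ x ∧ y ≠ z ∧
    g = (dist x y + dist x z - dist y z) / 2}

lemma pendSet_finite {α : Type*} [MetricSpace α] [Fintype α] (x : α) :
    ({g : ℝ | ∃ y z : α, y ≠ x ∧ z ≠ x ∧ y ≠ z ∧
      g = (dist x y + dist x z - dist y z) / 2}).Finite := by
  apply Set.Finite.subset (Set.finite_range
    (fun p : α × α => (dist x p.1 + dist x p.2 - dist p.1 p.2) / 2))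
  rintro g ⟨y, z, _, _, _, rfl⟩
  exact ⟨(y, z), rfl⟩

lemma pendSet_nonempty {α : Type*} [MetricSpace α] [Fintype α] [DecidableEq α]
    (hcard : 3 ≤ Fintype.card α) (x : α) :
    ({g : ℝ | ∃ y z : α, y ≠ x ∧ z ≠ x ∧ y ≠ z ∧
      g = (dist x y + dist x z - dist y z) / 2}).Nonempty := by
  have h1 : 1 < (Finset.univ.erase x).card := by
    rw [Finset.card_erase_of_mem (Finset.mem_univ x), Finset.card_univ]
    omega
  obtain ⟨y, hy, z, hz, hyz⟩ := Finset.one_lt_card.mp h1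
  exact ⟨_, y, z, Finset.ne_of_mem_erase hy, Finset.ne_of_mem_erase hz, hyz, rfl⟩

lemma pend_le {α : Type*} [MetricSpace α] [Fintype α] {x y z : α}
    (hy : y ≠ x) (hz : z ≠ x) (hyz : y ≠ z) :
    pend x ≤ (dist x y + dist x z - dist y z) / 2 :=
  csInf_le (pendSet_finite x).bddBelow ⟨y, z, hy, hz, hyz, rfl⟩

lemma pend_attained {α : Type*} [MetricSpace α] [Fintype α] [DecidableEq α]
    (hcard : 3 ≤ Fintype.card α) (x : α) :
    ∃ y z : α, y ≠ x ∧ z ≠ x ∧ y ≠ z ∧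
      pend x = (dist x y + dist x z - dist y z) / 2 :=
  (pendSet_nonempty hcard x).csInf_mem (pendSet_finite x)

lemma exists_third {α : Type*} [Fintype α] [DecidableEq α]
    (hcard : 3 ≤ Fintype.card α) (x y : α) : ∃ z : α, z ≠ x ∧ z ≠ y := by
  have h2 : ({x, y} : Finset α).card < Fintype.card α := by
    have h3 : ({x, y} : Finset α).card ≤ 2 := Finset.card_le_two
    omega
  have hss : ({x, y} : Finset α) ⊂ Finset.univ := by
    rw [Finset.ssubset_univ_iff]
    intro h
    rw [h, Finset.card_univ] at h2
    exact lt_irrefl _ h2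
  obtain ⟨z, _, hz⟩ := Finset.exists_of_ssubset hss
  simp only [Finset.mem_insert, Finset.mem_singleton, not_or] at hz
  exact ⟨z, hz.1, hz.2⟩

lemma pend_add_le {α : Type*} [MetricSpace α] [Fintype α] [DecidableEq α]
    (hcard : 3 ≤ Fintype.card α) {x y : α} (hxy : x ≠ y) :
    pend x + pend y ≤ dist x y := by
  obtain ⟨z, hzx, hzy⟩ := exists_third hcard x y
  have h1 := pend_le (x := x) (y := y) (z := z) hxy.symm hzx (Ne.symm hzy)
  have h2 := pend_le (x := y) (y := x) (z := z) hxy hzy (Ne.symm hzx)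
  have := dist_comm x y
  have := dist_comm x z
  have := dist_comm y z
  linarith

/-- If the trimming relation of a finite metric space `(X,d)` with `|X| ≥ 3` is trivial
(equivalently, the trimming projection is bijective), then
`d'(x,y) = d(x,y) − d̲(x) − d̲(y)` (for `x ≠ y`, and `d'(x,x) = 0`) is a metric and the
resulting space is trim. -/
theorem trimmed_metric_of_bijective_projection {α : Type*} [MetricSpace α] [Fintype α]
    [DecidableEq α]
    (hcard : 3 ≤ Fintype.card α)
    (htriv : ∀ x y : α, x ≠ y → dist x y ≠ pend x + pend y)
    (d' : α → α → ℝ)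
    (hd' : ∀ x y : α, d' x y = if x = y then 0 else dist x y - pend x - pend y) :
    (∀ x y : α, 0 ≤ d' x y) ∧
    (∀ x y : α, d' x y = 0 ↔ x = y) ∧
    (∀ x y : α, d' x y = d' y x) ∧
    (∀ x y z : α, d' x z ≤ d' x y + d' y z) ∧
    (∀ x : α, ∃ y z : α, y ≠ x ∧ z ≠ x ∧ y ≠ z ∧ d' y z = d' y x + d' x z) := by
  have hpos : ∀ x y : α, x ≠ y → 0 < d' x y := by
    intro x y hxy
    rw [hd', if_neg hxy]
    have h := pend_add_le hcard hxy
    have h2 := htriv x y hxy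
    cases lt_or_eq_of_le h with
    | inl h => linarith
    | inr h => exact absurd h.symm h2
  have hnn : ∀ x y : α, 0 ≤ d' x y := by
    intro x y
    rcases eq_or_ne x y with rfl | h
    · rw [hd', if_pos rfl]
    · exact (hpos x y h).le
  refine ⟨hnn, ?_, ?_, ?_, ?_⟩
  · intro x y
    constructor
    · intro h
      by_contra hxy
      exact absurd h (ne_of_gt (hpos x y hxy))
    · rintro rfl; rw [hd', if_pos rfl]
  · intro x y
    rcases eq_or_ne x y with rfl | h
    · rfl
    · rw [hd', hd', if_neg h, if_neg (Ne.symm h), dist_comm]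
      ring
  · intro x y z
    rcases eq_or_ne x z with rfl | hxz
    · rw [hd' x x, if_pos rfl]
      have := hnn x y; have := hnn y x
      linarith
    rcases eq_or_ne x y with rfl | hxy
    · rw [hd' x x, if_pos rfl]; linarith
    rcases eq_or_ne y z with rfl | hyz
    · rw [hd' y y, if_pos rfl]; linarith
    rw [hd' x z, if_neg hxz, hd' x y, if_neg hxy, hd' y z, if_neg hyz]
    have hp := pend_le (x := y) (y := x) (z := z) hxy hyz.symm hxz
    have ht := dist_triangle x y z
    have := dist_comm x y
    linarith
  · intro x
    obtain ⟨y, z, hy, hz, hyz, hp⟩ := pend_attained hcard x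
    refine ⟨y, z, hy, hz, hyz, ?_⟩
    rw [hd' y z, if_neg hyz, hd' y x, if_neg hy, hd' x z, if_neg (Ne.symm hz)]
    have := dist_comm x y
    have := dist_comm x z
    linarith
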